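/- For real x, y, z > 0, R_D(x,y,z) + R_D(y,z,x) + R_D(z,x,y) = 3 / (√x √y √z). -/

import Mathlib

open MeasureTheory Real

noncomputable def RC (x y : ℝ) : ℝ :=
  (1/2) * ∫ t in Set.Ioi (0:ℝ), (Real.sqrt (t + x))⁻¹ * (t + y)⁻¹

noncomputable def RF (x y z : ℝ) : ℝ :=
  (1/2) * ∫ t in Set.Ioi (0:ℝ), (Real.sqrt ((t + x) * (t + y) * (t + z)))⁻¹

noncomputable def RD (x y z : ℝ) : ℝ :=
  (3/2) * ∫ t in Set.Ioi (0:ℝ),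
    (Real.sqrt ((t + x) * (t + y)))⁻¹ * ((t + z) * Real.sqrt (t + z))⁻¹

noncomputable def RJ (x y z p : ℝ) : ℝ :=
  (3/2) * ∫ t in Set.Ioi (0:ℝ),
    (Real.sqrt ((t + x) * (t + y) * (t + z)))⁻¹ * (t + p)⁻¹

noncomputable def RG (x y z : ℝ) : ℝ :=
  (1/4) * ∫ t in Set.Ioi (0:ℝ),
    (Real.sqrt ((t + x) * (t + y) * (t + z)))⁻¹ *
      (x / (t + x) + y / (t + y) + z / (t + z)) * t


/-!
The three integrands add up to an exact derivative: with `P(t) = (t + x)(t + y)(t + z)`, the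
integrand of `RD x y z` is `P(t)^{-1/2} (t + z)⁻¹`, so the cyclic sum is
`P(t)^{-1/2} · P'(t) / P(t) = d/dt (-2 P(t)^{-1/2})`. Since `P(t) → ∞`, the sum of the three
integrals is `2 P(0)^{-1/2} = 2 / √(xyz)`.
-/

open Filter Set Topology

noncomputable def rdIntegrand (x y z t : ℝ) : ℝ :=
  (√((t + x) * (t + y)))⁻¹ * ((t + z) * √(t + z))⁻¹

lemma RD_eq_integral_rdIntegrand (x y z : ℝ) :
    RD x y z = 3 / 2 * ∫ t in Ioi 0, rdIntegrand x y z t :=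
  rfl

lemma inv_sqrt_mul_inv_mul_sqrt (p : ℝ) {c : ℝ} (hc : 0 ≤ c) :
    (√p)⁻¹ * (c * √c)⁻¹ = (√(p * c))⁻¹ * c⁻¹ := by
  rw [sqrt_mul' p hc, mul_inv, mul_inv]
  ring

lemma rdIntegrand_eq {x y z t : ℝ} (hz : 0 ≤ t + z) :
    rdIntegrand x y z t = (√((t + x) * (t + y) * (t + z)))⁻¹ * (t + z)⁻¹ :=
  inv_sqrt_mul_inv_mul_sqrt _ hz

lemma rdIntegrand_nonneg {x y z t : ℝ} (hz : 0 ≤ t + z) : 0 ≤ rdIntegrand x y z t := by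
  unfold rdIntegrand
  positivity

lemma measurable_rdIntegrand (x y z : ℝ) : Measurable (rdIntegrand x y z) := by
  unfold rdIntegrand
  fun_prop

lemma HasDerivAt.neg_two_mul_inv_sqrt {f : ℝ → ℝ} {f' t : ℝ} (hf : HasDerivAt f f' t)
    (ht : 0 < f t) :
    HasDerivAt (fun s => -2 * (√(f s))⁻¹) ((√(f t))⁻¹ * (f' / f t)) t := by
  have hsqrt : 0 < √(f t) := sqrt_pos.2 ht
  refine (((hf.sqrt ht.ne').inv hsqrt.ne').const_mul (-2)).congr_deriv ?_
  rw [sq_sqrt ht.le]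
  field_simp

lemma hasDerivAt_cyclic_sum_rdIntegrand {x y z t : ℝ} (hx : 0 < t + x) (hy : 0 < t + y)
    (hz : 0 < t + z) :
    HasDerivAt (fun s => -2 * (√((s + x) * (s + y) * (s + z)))⁻¹)
      (rdIntegrand x y z t + rdIntegrand y z x t + rdIntegrand z x y t) t := by
  have hP : HasDerivAt (fun s => (s + x) * (s + y) * (s + z))
      ((t + y) * (t + z) + (t + x) * (t + z) + (t + x) * (t + y)) t := by
    refine ((((hasDerivAt_id t).add_const x).mul ((hasDerivAt_id t).add_const y)).mul
      ((hasDerivAt_id t).add_const z)).congr_deriv ?_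
    simp only [id_eq, Pi.mul_apply]
    ring
  refine (hP.neg_two_mul_inv_sqrt (by positivity)).congr_deriv ?_
  rw [rdIntegrand_eq hz.le, rdIntegrand_eq hx.le, rdIntegrand_eq hy.le,
    show (t + y) * (t + z) * (t + x) = (t + x) * (t + y) * (t + z) by ring,
    show (t + z) * (t + x) * (t + y) = (t + x) * (t + y) * (t + z) by ring]
  field_simp
  ring

lemma tendsto_neg_two_mul_inv_sqrt_cubic (x y z : ℝ) :
    Tendsto (fun s => -2 * (√((s + x) * (s + y) * (s + z)))⁻¹) atTop (𝓝 0) := by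
  have hP : Tendsto (fun s : ℝ => (s + x) * (s + y) * (s + z)) atTop atTop :=
    ((tendsto_atTop_add_const_right _ x tendsto_id).atTop_mul_atTop₀
      (tendsto_atTop_add_const_right _ y tendsto_id)).atTop_mul_atTop₀
      (tendsto_atTop_add_const_right _ z tendsto_id)
  simpa using (tendsto_inv_atTop_zero.comp (tendsto_sqrt_atTop.comp hP)).const_mul (-2)

lemma integrableOn_and_integral_cyclic_sum_rdIntegrand {x y z : ℝ} (hx : 0 < x) (hy : 0 < y)
    (hz : 0 < z) :
    IntegrableOn (fun t => rdIntegrand x y z t + rdIntegrand y z x t + rdIntegrand z x y t)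
        (Ioi 0) ∧
      ∫ t in Ioi 0, (rdIntegrand x y z t + rdIntegrand y z x t + rdIntegrand z x y t) =
        2 * (√(x * y * z))⁻¹ := by
  have hderiv (t : ℝ) (ht : t ∈ Ici 0) := hasDerivAt_cyclic_sum_rdIntegrand
    (x := x) (y := y) (z := z) (t := t) (by linarith [ht.out]) (by linarith [ht.out])
    (by linarith [ht.out])
  have hnonneg (t : ℝ) (ht : t ∈ Ioi 0) :
      0 ≤ rdIntegrand x y z t + rdIntegrand y z x t + rdIntegrand z x y t :=
    add_nonneg (add_nonneg (rdIntegrand_nonneg (by linarith [ht.out]))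
      (rdIntegrand_nonneg (by linarith [ht.out]))) (rdIntegrand_nonneg (by linarith [ht.out]))
  have hlim := tendsto_neg_two_mul_inv_sqrt_cubic x y z
  refine ⟨integrableOn_Ioi_deriv_of_nonneg' hderiv hnonneg hlim, ?_⟩
  rw [integral_Ioi_of_hasDerivAt_of_nonneg' hderiv hnonneg hlim]
  simp

lemma integrableOn_rdIntegrand {x y z : ℝ} (hx : 0 < x) (hy : 0 < y) (hz : 0 < z) :
    IntegrableOn (rdIntegrand x y z) (Ioi 0) := by
  refine integrable_of_le_of_le (measurable_rdIntegrand x y z).aestronglyMeasurable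
    ?_ ?_ (integrable_zero _ _ _) (integrableOn_and_integral_cyclic_sum_rdIntegrand hx hy hz).1
  all_goals
    filter_upwards [ae_restrict_mem measurableSet_Ioi] with t ht
  · exact rdIntegrand_nonneg (by linarith [ht.out])
  · linarith [rdIntegrand_nonneg (x := y) (y := z) (z := x) (t := t) (by linarith [ht.out]),
      rdIntegrand_nonneg (x := z) (y := x) (z := y) (t := t) (by linarith [ht.out])]

theorem stmt8 (x y z : ℝ) (hx : 0 < x) (hy : 0 < y) (hz : 0 < z) :
    RD x y z + RD y z x + RD z x y =
      3 / (Real.sqrt x * Real.sqrt y * Real.sqrt z) := by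
  have h₁ := integrableOn_rdIntegrand hx hy hz
  have h₂ := integrableOn_rdIntegrand hy hz hx
  have h₃ := integrableOn_rdIntegrand hz hx hy
  have hsum := (integrableOn_and_integral_cyclic_sum_rdIntegrand hx hy hz).2
  rw [integral_add (f := fun t => rdIntegrand x y z t + rdIntegrand y z x t) (h₁.add h₂) h₃,
    integral_add h₁ h₂, sqrt_mul (by positivity), sqrt_mul hx.le] at hsum
  rw [RD_eq_integral_rdIntegrand, RD_eq_integral_rdIntegrand, RD_eq_integral_rdIntegrand,
    div_eq_mul_inv]
  linear_combination 3 / 2 * hsum
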